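/- The matrix R̂ of the previous context satisfies the braid relation (R̂ ⊗ Id)(Id ⊗ R̂)(R̂ ⊗ Id) = (Id ⊗ R̂)(R̂ ⊗ Id)(Id ⊗ R̂) as endomorphisms of V ⊗ V ⊗ V. -/
import Mathlib


set_option synthInstance.maxHeartbeats 400000
set_option maxHeartbeats 800000
noncomputable section

/-- The field ℂ(q) of rational functions in an indeterminate q. -/
abbrev Kq : Type := RatFunc ℂ

/-- The indeterminate q ∈ ℂ(q). -/
def q : Kq := RatFunc.X

/-- The R-matrix R̂ on V ⊗ V, V = ℂ(q)^N, with row index (i',j') and column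
index (i,j): the entry R̂^{i'j'}_{ij}. -/
def Rhat (N : ℕ) : Matrix (Fin N × Fin N) (Fin N × Fin N) Kq :=
  fun p p' =>
    if p'.1 = p'.2 ∧ p.1 = p'.1 ∧ p.2 = p'.2 then q⁻¹
    else if p.1 = p'.2 ∧ p.2 = p'.1 ∧ p'.1 ≠ p'.2 then 1
    else if p.1 = p'.1 ∧ p.2 = p'.2 ∧ p'.1 < p'.2 then q⁻¹ - q
    else 0

/-- R̂ ⊗ Id acting on the first two factors of V ⊗ V ⊗ V. -/
def R12 (N : ℕ) : Matrix (Fin N × Fin N × Fin N) (Fin N × Fin N × Fin N) Kq :=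
  fun p p' => if p.2.2 = p'.2.2 then Rhat N (p.1, p.2.1) (p'.1, p'.2.1) else 0

/-- Id ⊗ R̂ acting on the last two factors of V ⊗ V ⊗ V. -/
def R23 (N : ℕ) : Matrix (Fin N × Fin N × Fin N) (Fin N × Fin N × Fin N) Kq :=
  fun p p' => if p.1 = p'.1 then Rhat N p.2 p'.2 else 0


/-- Auxiliary: the diagonal coefficient of R̂. -/
def dd {N : ℕ} (x y : Fin N) : Kq := if x = y then q⁻¹ else if x < y then q⁻¹ - q else 0

lemma Rhat_apply {N : ℕ} (a b x y : Fin N) :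
    Rhat N (a, b) (x, y) =
      (if a = x ∧ b = y then dd x y else 0) + (if (a = y ∧ b = x) ∧ x ≠ y then 1 else 0) := by
  simp only [Rhat, dd]; split_ifs <;> simp_all

lemma R12_entry {N : ℕ} (p : Fin N × Fin N × Fin N) (x y z : Fin N) :
    R12 N p (x, y, z) =
      (if p = (x, y, z) then dd x y else 0) +
        (if x = y then 0 else if p = (y, x, z) then 1 else 0) := by
  obtain ⟨a, b, c⟩ := p
  simp only [R12, Rhat_apply, Prod.mk.injEq]
  split_ifs <;> simp_all

lemma R23_entry {N : ℕ} (p : Fin N × Fin N × Fin N) (x y z : Fin N) :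
    R23 N p (x, y, z) =
      (if p = (x, y, z) then dd y z else 0) +
        (if y = z then 0 else if p = (x, z, y) then 1 else 0) := by
  obtain ⟨a, b, c⟩ := p
  simp only [R23, Rhat_apply, Prod.mk.injEq]
  split_ifs <;> simp_all

lemma mul_R12_apply {N : ℕ} (X : Matrix (Fin N × Fin N × Fin N) (Fin N × Fin N × Fin N) Kq)
    (r : Fin N × Fin N × Fin N) (x y z : Fin N) :
    (X * R12 N) r (x, y, z) =
      X r (x, y, z) * dd x y + (if x = y then 0 else X r (y, x, z)) := by
  rw [Matrix.mul_apply]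
  have h : ∀ p : Fin N × Fin N × Fin N,
      X r p * R12 N p (x, y, z) =
        (if p = (x, y, z) then X r p * dd x y else 0) +
          (if x = y then 0 else if p = (y, x, z) then X r p else 0) := by
    intro p
    rw [R12_entry]
    split_ifs <;> simp_all
  rw [Finset.sum_congr rfl (fun p _ => h p), Finset.sum_add_distrib,
    Finset.sum_ite_eq' Finset.univ (x, y, z) (fun p => X r p * dd x y)]
  simp only [Finset.mem_univ, if_true]
  congr 1
  split_ifs with hxy
  · simp
  · rw [Finset.sum_ite_eq' Finset.univ (y, x, z) (fun p => X r p)]; simp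

lemma mul_R23_apply {N : ℕ} (X : Matrix (Fin N × Fin N × Fin N) (Fin N × Fin N × Fin N) Kq)
    (r : Fin N × Fin N × Fin N) (x y z : Fin N) :
    (X * R23 N) r (x, y, z) =
      X r (x, y, z) * dd y z + (if y = z then 0 else X r (x, z, y)) := by
  rw [Matrix.mul_apply]
  have h : ∀ p : Fin N × Fin N × Fin N,
      X r p * R23 N p (x, y, z) =
        (if p = (x, y, z) then X r p * dd y z else 0) +
          (if y = z then 0 else if p = (x, z, y) then X r p else 0) := by
    intro p
    rw [R23_entry]
    split_ifs <;> simp_all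
  rw [Finset.sum_congr rfl (fun p _ => h p), Finset.sum_add_distrib,
    Finset.sum_ite_eq' Finset.univ (x, y, z) (fun p => X r p * dd y z)]
  simp only [Finset.mem_univ, if_true]
  congr 1
  split_ifs with hyz
  · simp
  · rw [Finset.sum_ite_eq' Finset.univ (x, z, y) (fun p => X r p)]; simp

lemma dd_self {N : ℕ} {x y : Fin N} (h : x = y) : dd x y = q⁻¹ := by simp [dd, h]
lemma dd_lt {N : ℕ} {x y : Fin N} (h : x < y) : dd x y = q⁻¹ - q := by simp [dd, h, h.ne]
lemma dd_gt {N : ℕ} {x y : Fin N} (h : y < x) : dd x y = 0 := by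
  simp [dd, h.ne', lt_asymm h]

/-- The braid relation (R̂⊗Id)(Id⊗R̂)(R̂⊗Id) = (Id⊗R̂)(R̂⊗Id)(Id⊗R̂). -/
theorem Rhat_braid (N : ℕ) :
    R12 N * R23 N * R12 N = R23 N * R12 N * R23 N := by
  have hq : (q : Kq) ≠ 0 := RatFunc.X_ne_zero
  ext ⟨a, b, c⟩ ⟨i, j, k⟩
  simp only [mul_R12_apply, mul_R23_apply, R12_entry, R23_entry]
  rcases lt_trichotomy i j with h1 | h1 | h1 <;>
    rcases lt_trichotomy j k with h2 | h2 | h2 <;>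
    rcases lt_trichotomy i k with h3 | h3 | h3 <;>
    first
      | (exfalso; omega)
      | (try subst h1
         try subst h2
         try subst h3
         simp (disch := omega) only [dd_self, dd_lt, dd_gt, if_pos, if_neg]
         all_goals (split_ifs <;>
           first
             | rfl
             | ring1
             | ((simp only [Prod.mk.injEq] at *) <;> (exfalso; omega))
             | (field_simp; ring1)))


end
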